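/- Let t ≥ s ≥ 2 be integers, let G be a bipartite graph with bipartition (A, B) that contains no copy of H_{s,t}, and let M be an (s−1)-matching in G. Then the number of s-matchings L contained in the neighbourhood graph N(M) such that the pair (M, L) is 2t-correlated is at most (s−1)(t−1) · e(N(M))^{s−1} · v(N(M)). -/

import Mathlib

open SimpleGraph

/-- `G` contains a copy of `H` (an injective graph homomorphism from `H` to `G`). -/
def SimpleGraph.Contains {α β : Type*} (G : SimpleGraph α) (H : SimpleGraph β) : Prop :=
  ∃ f : H →g G, Function.Injective f

/-- The graph `H_{s,t}`: two vertex-disjoint copies of `K_{s,t}` together with a perfect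
matching joining the two images of every vertex of `K_{s,t}`. -/
def Hgraph (s t : ℕ) : SimpleGraph ((Fin s ⊕ Fin t) × Bool) :=
  SimpleGraph.fromRel fun x y =>
    (x.2 = y.2 ∧ (completeBipartiteGraph (Fin s) (Fin t)).Adj x.1 y.1) ∨
    (x.2 ≠ y.2 ∧ x.1 = y.1)

/-- The common neighbourhood `N(S) = ⋂_{v ∈ S} N(v)` of a set `S` of vertices in `G`. -/
def commonNbrs {V : Type*} (G : SimpleGraph V) (S : Set V) : Set V :=
  ⋂ v ∈ S, G.neighborSet v

/-- The set `V(M)` of vertices covered by a set `M` of edges. -/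
def matchVerts {V : Type*} (M : Finset (Sym2 V)) : Set V :=
  {v | ∃ e ∈ M, v ∈ e}

/-- An `r`-matching in `G`: a set of `r` pairwise vertex-disjoint edges of `G`. -/
def IsMatchingIn {V : Type*} (G : SimpleGraph V) (r : ℕ) (M : Finset (Sym2 V)) : Prop :=
  M.card = r ∧ ↑M ⊆ G.edgeSet ∧
    (M : Set (Sym2 V)).Pairwise fun e f => ∀ x : V, ¬(x ∈ e ∧ x ∈ f)

/-- The neighbourhood graph `N(M)` of a matching `M` in the bipartite graph `G` with
bipartition `(A, B)`: the bipartite subgraph of `G` induced by the vertex sets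
`N(B_M) \ V(M)` and `N(A_M) \ V(M)`, where `A_M = V(M) ∩ A` and `B_M = V(M) ∩ B`. -/
def nbrGraph {V : Type*} (G : SimpleGraph V) (A B : Set V) (M : Finset (Sym2 V)) :
    SimpleGraph V :=
  SimpleGraph.fromRel fun u v =>
    G.Adj u v ∧ u ∈ commonNbrs G (matchVerts M ∩ B) \ matchVerts M ∧
      v ∈ commonNbrs G (matchVerts M ∩ A) \ matchVerts M

/-- The pair `(M, L)` is `c`-correlated: `L` is a subgraph of `N(M)` (i.e. `M ∼ L`) and some
vertex of `V(M)` has degree at least `c` in `N(L)`. -/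
def Correlated {V : Type*} (G : SimpleGraph V) (A B : Set V) (c : ℕ)
    (M L : Finset (Sym2 V)) : Prop :=
  ↑L ⊆ (nbrGraph G A B M).edgeSet ∧
    ∃ v ∈ matchVerts M, c ≤ (((nbrGraph G A B L).neighborSet v).ncard : ℕ)

/-!
Fix an edge of `M` and its endpoint `v ∈ A` (an endpoint in `B` is handled by exchanging `A` and
`B`). Every `s`-matching `L` of `N(M)` in which `v` has degree at least `2t` is `L' + ab` with `L'`
an `(s-1)`-set of edges of `N(M)` and `b ∈ N(A_M) \ V(M)`. For fixed `L'` and `b` fewer than `t`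
vertices `a` are possible: given `t` of them, `a_1, …, a_t`, pick distinct neighbours `u_k ∉ B_M`
of `v` in `N(L' + a_k b)` (there are at least `2t - |B_M| ≥ t` candidates each). Then
`{v} ∪ A_{L'}, {u_k}` and `{b} ∪ B_M, {a_k}` span two copies of `K_{s,t}`, joined by the matching
`vb`, `A_{L'} ~ B_M`, `a_k u_k` into a copy of `H_{s,t}`. Summing over the `s - 1` edges of `M`, the
at most `e(N(M))^{s-1}` sets `L'` and the vertices `b` gives the bound.
-/

lemma exists_injective_mem_of_card_le {ι α : Type*} [Fintype ι] (T : ι → Set α)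
    (hT : ∀ i, (T i).Finite) (h : ∀ i, Fintype.card ι ≤ (T i).ncard) :
    ∃ f : ι → α, Function.Injective f ∧ ∀ i, f i ∈ T i := by
  classical
  obtain ⟨f, hf, hmem⟩ := (Finset.all_card_le_biUnion_card_iff_exists_injective
    fun i => (hT i).toFinset).1 fun s => by
      rcases s.eq_empty_or_nonempty with rfl | ⟨i, hi⟩
      · simp
      · calc s.card ≤ Fintype.card ι := s.card_le_univ
          _ ≤ (hT i).toFinset.card := (Set.ncard_eq_toFinset_card _ (hT i)) ▸ h i
          _ ≤ _ := Finset.card_le_card <|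
            Finset.subset_biUnion_of_mem (fun i => (hT i).toFinset) hi
  exact ⟨f, hf, fun i => (hT i).mem_toFinset.1 (hmem i)⟩

lemma exists_injective_mem_sdiff {ι α : Type*} [Fintype ι] [Finite α] (T : ι → Set α)
    (S : Set α) (h : ∀ i, Fintype.card ι + S.ncard ≤ (T i).ncard) :
    ∃ f : ι → α, Function.Injective f ∧ ∀ i, f i ∈ T i \ S :=
  exists_injective_mem_of_card_le _ (fun _ => Set.toFinite _) fun i => by
    have := Set.ncard_le_ncard_sdiff_add_ncard (T i) S
    have := h i
    omega

lemma injective_sumElim_cons {α : Type*} {n t : ℕ} {x : α} {p : Fin n → α} {a : Fin t → α}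
    {S : Set α} (hp : Function.Injective p) (ha : Function.Injective a) (hpS : ∀ i, p i ∈ S)
    (haS : ∀ k, a k ∉ S) (hxS : x ∉ S) (hxa : ∀ k, x ≠ a k) :
    Function.Injective (Sum.elim (Fin.cons x p : Fin (n + 1) → α) a) :=
  (Fin.cons_injective_iff.2 ⟨fun ⟨i, hi⟩ => hxS (hi ▸ hpS i), hp⟩).sumElim ha fun i k =>
    Fin.cases (hxa k) (fun i h => haS k (h ▸ hpS i)) i

section

variable {V : Type*}

/-- The two copies of `K_{s,t}` are embedded as `φ ∘ inl, ψ ∘ inr` and `ψ ∘ inl, φ ∘ inr`. -/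
lemma contains_Hgraph_of_injective {G : SimpleGraph V} {s t : ℕ} (φ ψ : Fin s ⊕ Fin t → V)
    (hφ : Function.Injective φ) (hψ : Function.Injective ψ) (hφψ : ∀ x y, φ x ≠ ψ y)
    (hcopy₀ : ∀ i k, G.Adj (φ (.inl i)) (ψ (.inr k)))
    (hcopy₁ : ∀ i k, G.Adj (ψ (.inl i)) (φ (.inr k)))
    (hmatch : ∀ x, G.Adj (φ x) (ψ x)) : G.Contains (Hgraph s t) := by
  let f : (Fin s ⊕ Fin t) × Bool → V := fun x => if x.1.isLeft = x.2 then ψ x.1 else φ x.1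
  refine ⟨⟨f, ?_⟩, ?_⟩
  · rintro ⟨i | k, _ | _⟩ ⟨j | l, _ | _⟩ h <;> simp [Hgraph, f] at h ⊢ <;>
      first
        | exact hcopy₀ _ _ | exact (hcopy₀ _ _).symm | exact hcopy₁ _ _ | exact (hcopy₁ _ _).symm
        | rcases h with rfl | rfl <;> first | exact hmatch _ | exact (hmatch _).symm
  · rintro ⟨i | k, _ | _⟩ ⟨j | l, _ | _⟩ h <;>
      simp [f, hφ.eq_iff, hψ.eq_iff, hφψ, fun x y => (hφψ y x).symm] at h ⊢ <;> exact h

variable {G : SimpleGraph V} {A B : Set V} {M L : Finset (Sym2 V)} {r : ℕ} {e : Sym2 V}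
  {u v w x : V}

def nbrSide (G : SimpleGraph V) (A : Set V) (M : Finset (Sym2 V)) : Set V :=
  commonNbrs G (matchVerts M ∩ A) \ matchVerts M

lemma adj_of_mem_commonNbrs {S : Set V} (hu : u ∈ commonNbrs G S) (hw : w ∈ S) : G.Adj w u :=
  Set.mem_iInter₂.1 hu w hw

lemma commonNbrs_subset_of_mem (hG : G.IsBipartiteWith A B) {S : Set V} (hw : w ∈ S)
    (hwA : w ∈ A) : commonNbrs G S ⊆ B :=
  fun _ hu => hG.mem_of_mem_adj hwA (adj_of_mem_commonNbrs hu hw)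

lemma matchVerts_mono (h : L ⊆ M) : matchVerts L ⊆ matchVerts M :=
  fun _ ⟨e, he, hx⟩ => ⟨e, h he, hx⟩

lemma nbrGraph_adj : (nbrGraph G A B M).Adj u v ↔ u ≠ v ∧
    (G.Adj u v ∧ u ∈ nbrSide G B M ∧ v ∈ nbrSide G A M ∨
      G.Adj v u ∧ v ∈ nbrSide G B M ∧ u ∈ nbrSide G A M) :=
  Iff.rfl

lemma nbrGraph_le : nbrGraph G A B M ≤ G := by
  intro u v h
  rcases (nbrGraph_adj.1 h).2 with ⟨h, -⟩ | ⟨h, -⟩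
  exacts [h, h.symm]

lemma nbrGraph_comm : nbrGraph G B A M = nbrGraph G A B M := by
  ext u v
  simp only [nbrGraph_adj, G.adj_comm u v]
  tauto

lemma exists_mem_left_of_mem_edgeSet (hG : G.IsBipartiteWith A B) (he : e ∈ G.edgeSet) :
    ∃ x ∈ e, x ∈ A := by
  induction e using Sym2.ind with
  | h x y =>
    rcases hG.mem_of_adj he with ⟨hx, -⟩ | ⟨-, hy⟩
    exacts [⟨x, Sym2.mem_mk_left x y, hx⟩, ⟨y, Sym2.mem_mk_right x y, hy⟩]

lemma exists_mem_matchVerts_inter (hG : G.IsBipartiteWith A B) (hM : ↑M ⊆ G.edgeSet)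
    (hne : M.Nonempty) : (matchVerts M ∩ A).Nonempty :=
  have ⟨_, he⟩ := hne
  have ⟨x, hxe, hxA⟩ := exists_mem_left_of_mem_edgeSet hG (hM he)
  ⟨x, ⟨_, he, hxe⟩, hxA⟩

lemma nbrSide_subset (hG : G.IsBipartiteWith A B) (hM : ↑M ⊆ G.edgeSet) (hne : M.Nonempty) :
    nbrSide G A M ⊆ B :=
  have ⟨_, hw, hwA⟩ := exists_mem_matchVerts_inter hG hM hne
  Set.sdiff_subset.trans (commonNbrs_subset_of_mem hG ⟨hw, hwA⟩ hwA)

lemma isBipartiteWith_nbrGraph (hG : G.IsBipartiteWith A B) (hM : ↑M ⊆ G.edgeSet)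
    (hne : M.Nonempty) :
    (nbrGraph G A B M).IsBipartiteWith (nbrSide G B M) (nbrSide G A M) where
  disjoint := hG.disjoint.mono (nbrSide_subset hG.symm hM hne) (nbrSide_subset hG hM hne)
  mem_of_adj _ _ h := by
    rcases (nbrGraph_adj.1 h).2 with ⟨-, h⟩ | ⟨-, h⟩
    exacts [Or.inl h, Or.inr h.symm]

lemma IsMatchingIn.mono {H : SimpleGraph V} (h : IsMatchingIn G r M) (hle : G ≤ H) :
    IsMatchingIn H r M :=
  ⟨h.1, h.2.1.trans (edgeSet_mono hle), h.2.2⟩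

lemma IsMatchingIn.eq_of_mem (h : IsMatchingIn G r M) {f : Sym2 V} (he : e ∈ M) (hf : f ∈ M)
    (hxe : x ∈ e) (hxf : x ∈ f) : e = f :=
  by_contra fun hne => h.2.2 he hf hne x ⟨hxe, hxf⟩

lemma IsMatchingIn.notMem_of_insert [DecidableEq V] (h : IsMatchingIn G (r + 1) (insert e L))
    (hL : L.card = r) : e ∉ L := fun he => by
  have := h.1
  rw [Finset.insert_eq_of_mem he] at this
  omega

lemma IsMatchingIn.of_insert [DecidableEq V] (h : IsMatchingIn G (r + 1) (insert e L))
    (hL : L.card = r) : IsMatchingIn G r L :=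
  ⟨hL, (Finset.coe_subset.2 (Finset.subset_insert e L)).trans h.2.1,
    h.2.2.mono (Finset.coe_subset.2 (Finset.subset_insert e L))⟩

lemma IsMatchingIn.notMem_matchVerts_of_insert [DecidableEq V]
    (h : IsMatchingIn G (r + 1) (insert e L)) (hL : L.card = r) (hx : x ∈ e) :
    x ∉ matchVerts L := fun ⟨_, hf, hxf⟩ =>
  h.notMem_of_insert hL <|
    h.eq_of_mem (Finset.mem_insert_self e L) (Finset.mem_insert_of_mem hf) hx hxf ▸ hf

lemma eq_of_mem_of_mem_edgeSet (hG : G.IsBipartiteWith A B) (he : e ∈ G.edgeSet) {y : V}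
    (hx : x ∈ e) (hy : y ∈ e) (hxA : x ∈ A) (hyA : y ∈ A) : x = y := by
  by_contra hne
  rw [(Sym2.mem_and_mem_iff hne).1 ⟨hx, hy⟩, mem_edgeSet] at he
  exact Set.disjoint_left.1 hG.disjoint hyA (hG.mem_of_mem_adj hxA he)

lemma IsMatchingIn.ncard_matchVerts_inter (hG : G.IsBipartiteWith A B)
    (hM : IsMatchingIn G r M) : (matchVerts M ∩ A).ncard = r := by
  rw [← hM.1, ← Set.ncard_coe_finset]
  refine Set.ncard_congr (fun x hx => hx.1.choose) (fun x hx => hx.1.choose_spec.1)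
    (fun x y hx hy hxy => ?_) (fun e he => ?_)
  · exact eq_of_mem_of_mem_edgeSet hG (hM.2.1 hx.1.choose_spec.1) hx.1.choose_spec.2
      (hxy ▸ hy.1.choose_spec.2) hx.2 hy.2
  · obtain ⟨x, hxe, hxA⟩ := exists_mem_left_of_mem_edgeSet hG (hM.2.1 he)
    have hx : x ∈ matchVerts M := ⟨e, he, hxe⟩
    exact ⟨x, ⟨hx, hxA⟩, hM.eq_of_mem hx.choose_spec.1 he hx.choose_spec.2 hxe⟩

lemma matchVerts_subset_support {H : SimpleGraph V} (hL : ↑L ⊆ H.edgeSet) :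
    matchVerts L ⊆ H.support := by
  rintro x ⟨e, he, hx⟩
  have := hL he
  rw [← Sym2.other_spec hx, mem_edgeSet] at this
  exact ⟨_, this⟩

lemma mem_nbrSide_of_nbrGraph_adj (hG : G.IsBipartiteWith A B) (hL : ↑L ⊆ G.edgeSet)
    (hne : L.Nonempty) (hvA : v ∈ A) (h : (nbrGraph G A B L).Adj v u) :
    v ∈ nbrSide G B L ∧ u ∈ nbrSide G A L :=
  ((isBipartiteWith_nbrGraph hG hL hne).mem_of_adj h).resolve_right fun h' =>
    Set.disjoint_left.1 hG.disjoint hvA (nbrSide_subset hG hL hne h'.1)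

lemma matchVerts_inter_subset_nbrSide (hG : G.IsBipartiteWith A B) (hM : ↑M ⊆ G.edgeSet)
    (hne : M.Nonempty) (hL : ↑L ⊆ (nbrGraph G A B M).edgeSet) :
    matchVerts L ∩ A ⊆ nbrSide G B M := fun _ ⟨hx, hxA⟩ =>
  (isBipartiteWith_support_subset (isBipartiteWith_nbrGraph hG hM hne)
    (matchVerts_subset_support hL hx)).resolve_right fun hxY =>
      Set.disjoint_left.1 hG.disjoint hxA (nbrSide_subset hG hM hne hxY)

lemma exists_injective_adj_matchVerts_inter [Finite V] {n : ℕ} (hG : G.IsBipartiteWith A B)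
    (hM : IsMatchingIn G n M) (hne : M.Nonempty) (hL : IsMatchingIn (nbrGraph G A B M) n L) :
    ∃ p q : Fin n → V, Function.Injective p ∧ Function.Injective q ∧
      (∀ i, p i ∈ matchVerts L ∩ A) ∧ (∀ i, q i ∈ matchVerts M ∩ B) ∧ ∀ i, G.Adj (p i) (q i) := by
  obtain ⟨p, hp, hpL⟩ : ∃ p : Fin n → V, Function.Injective p ∧ ∀ i, p i ∈ matchVerts L ∩ A :=
    exists_injective_mem_of_card_le _ (fun _ => Set.toFinite _) fun _ => by
      simp [(hL.mono nbrGraph_le).ncard_matchVerts_inter hG]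
  obtain ⟨q, hq, hqM⟩ : ∃ q : Fin n → V, Function.Injective q ∧ ∀ i, q i ∈ matchVerts M ∩ B :=
    exists_injective_mem_of_card_le _ (fun _ => Set.toFinite _) fun _ => by
      simp [hM.ncard_matchVerts_inter hG.symm]
  refine ⟨p, q, hp, hq, hpL, hqM, fun i => ?_⟩
  exact (adj_of_mem_commonNbrs (matchVerts_inter_subset_nbrSide hG hM.2.1 hne hL.2.1 (hpL i)).1
    (hqM i)).symm

def correlatedAt (G : SimpleGraph V) (A B : Set V) (M : Finset (Sym2 V)) (s c : ℕ) (v : V) :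
    Set (Finset (Sym2 V)) :=
  {L | IsMatchingIn (nbrGraph G A B M) s L ∧ c ≤ ((nbrGraph G A B L).neighborSet v).ncard}

lemma contains_Hgraph_of_extensions [Finite V] [DecidableEq V] (hG : G.IsBipartiteWith A B)
    {n t : ℕ} (hnt : n ≤ t) (hM : IsMatchingIn G n M) (hv : v ∈ matchVerts M) (hvA : v ∈ A)
    {L' : Finset (Sym2 V)} (hL' : L'.card = n) {b : V} (hb : b ∈ nbrSide G A M)
    (a : Fin t → V) (ha : Function.Injective a)
    (hext : ∀ k, insert s(a k, b) L' ∈ correlatedAt G A B M (n + 1) (2 * t) v) :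
    G.Contains (Hgraph (n + 1) t) := by
  have hMne : M.Nonempty := ⟨_, hv.choose_spec.1⟩
  have k₀ : Fin t := ⟨0, by have := Finset.card_pos.2 hMne; have := hM.1; omega⟩
  have hNM := isBipartiteWith_nbrGraph hG hM.2.1 hMne
  have hbB : b ∈ B := nbrSide_subset hG hM.2.1 hMne hb
  have hLG k : ↑(insert s(a k, b) L') ⊆ G.edgeSet :=
    (hext k).1.2.1.trans (edgeSet_mono nbrGraph_le)
  have hLne k : (insert s(a k, b) L').Nonempty := Finset.insert_nonempty _ _
  have haX k : a k ∈ nbrSide G B M :=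
    hNM.mem_of_mem_adj' hb ((hext k).1.2.1 (Finset.mem_insert_self _ _))
  have haA k : a k ∈ A := nbrSide_subset hG.symm hM.2.1 hMne (haX k)
  have haL' k : a k ∉ matchVerts L' :=
    (hext k).1.notMem_matchVerts_of_insert hL' (Sym2.mem_mk_left _ _)
  obtain ⟨p, q, hp, hq, hpL', hqM, hpq⟩ :=
    exists_injective_adj_matchVerts_inter hG hM hMne ((hext k₀).1.of_insert hL')
  obtain ⟨u, hu, huN⟩ := exists_injective_mem_sdiff
    (fun k => (nbrGraph G A B (insert s(a k, b) L')).neighborSet v) (matchVerts M ∩ B) fun k => by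
      rw [Fintype.card_fin, hM.ncard_matchVerts_inter hG.symm]
      have := (hext k).2
      omega
  have huY k := mem_nbrSide_of_nbrGraph_adj hG (hLG k) (hLne k) hvA (huN k).1
  have hvL k : v ∉ matchVerts (insert s(a k, b) L') := (huY k).1.2
  have huL k : u k ∉ matchVerts (insert s(a k, b) L') := (huY k).2.2
  have hbL k : b ∈ matchVerts (insert s(a k, b) L') :=
    ⟨_, Finset.mem_insert_self _ _, Sym2.mem_mk_right _ _⟩
  have haL k : a k ∈ matchVerts (insert s(a k, b) L') :=
    ⟨_, Finset.mem_insert_self _ _, Sym2.mem_mk_left _ _⟩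
  have hpL i k : p i ∈ matchVerts (insert s(a k, b) L') :=
    matchVerts_mono (Finset.subset_insert _ _) (hpL' i).1
  have huB k : u k ∈ B := nbrSide_subset hG (hLG k) (hLne k) (huY k).2
  have hφA : ∀ x, Sum.elim (Fin.cons v p) a x ∈ A :=
    Sum.rec (Fin.cases hvA fun i => (hpL' i).2) haA
  have hψB : ∀ x, Sum.elim (Fin.cons b q) u x ∈ B :=
    Sum.rec (Fin.cases hbB fun i => (hqM i).2) huB
  refine contains_Hgraph_of_injective (Sum.elim (Fin.cons v p) a) (Sum.elim (Fin.cons b q) u)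
    ?_ ?_ (fun x y h => Set.disjoint_left.1 hG.disjoint (hφA x) (h ▸ hψB y)) ?_ ?_ ?_
  · exact injective_sumElim_cons hp ha (fun i => (hpL' i).1) haL'
      (fun h => hvL k₀ (matchVerts_mono (Finset.subset_insert _ _) h))
      fun k h => hvL k (h ▸ haL k)
  · exact injective_sumElim_cons hq hu hqM (fun k => (huN k).2) (fun h => hb.2 h.1)
      fun k h => huL k (h ▸ hbL k)
  · exact fun i k => Fin.cases (nbrGraph_le (huN k).1)
      (fun i => adj_of_mem_commonNbrs (huY k).2.1 ⟨hpL i k, (hpL' i).2⟩) i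
  · exact fun i k => Fin.cases ((hLG k) (Finset.mem_insert_self _ _)).symm
      (fun i => adj_of_mem_commonNbrs (haX k).1 (hqM i)) i
  · exact Sum.rec (Fin.cases (adj_of_mem_commonNbrs (huY k₀).1.1 ⟨hbL k₀, hbB⟩).symm
      hpq)
      fun k => adj_of_mem_commonNbrs (huY k).2.1 ⟨haL k, haA k⟩

lemma ncard_extensions_lt [Finite V] [DecidableEq V] (hG : G.IsBipartiteWith A B) {n t : ℕ}
    (hnt : n ≤ t) (hfree : ¬ G.Contains (Hgraph (n + 1) t)) (hM : IsMatchingIn G n M)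
    (hv : v ∈ matchVerts M) (hvA : v ∈ A) {L' : Finset (Sym2 V)} (hL' : L'.card = n) {b : V}
    (hb : b ∈ nbrSide G A M) :
    {a | insert s(a, b) L' ∈ correlatedAt G A B M (n + 1) (2 * t) v}.ncard < t := by
  by_contra! h
  obtain ⟨a, ha, hext⟩ := exists_injective_mem_of_card_le
    (fun _ : Fin t => {a | insert s(a, b) L' ∈ correlatedAt G A B M (n + 1) (2 * t) v})
    (fun _ => Set.toFinite _) fun _ => by simpa using h
  exact hfree (contains_Hgraph_of_extensions hG hnt hM hv hvA hL' hb a ha hext)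

lemma exists_eq_mk_of_mem_edgeSet_nbrGraph (he : e ∈ (nbrGraph G A B M).edgeSet) :
    ∃ a b, e = s(a, b) ∧ b ∈ nbrSide G A M := by
  induction e using Sym2.ind with
  | h x y =>
    rcases (nbrGraph_adj.1 he).2 with ⟨-, -, hy⟩ | ⟨-, -, hx⟩
    exacts [⟨x, y, rfl, hy⟩, ⟨y, x, Sym2.eq_swap, hx⟩]

open Classical in
lemma correlatedAt_subset_biUnion [Fintype V] [DecidableEq V] {n c : ℕ} :
    correlatedAt G A B M (n + 1) c v ⊆
      ⋃ L' ∈ (nbrGraph G A B M).edgeSet.toFinset.powersetCard n, ⋃ b ∈ (nbrSide G A M).toFinset,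
        (fun a => insert s(a, b) L') ''
          {a | insert s(a, b) L' ∈ correlatedAt G A B M (n + 1) c v} := by
  intro L hL
  obtain ⟨f, hf⟩ : L.Nonempty := Finset.card_pos.1 (by rw [hL.1.1]; omega)
  obtain ⟨a, b, rfl, hb⟩ := exists_eq_mk_of_mem_edgeSet_nbrGraph (hL.1.2.1 hf)
  have hL' : insert s(a, b) (L.erase s(a, b)) = L := Finset.insert_erase hf
  refine Set.mem_iUnion₂.2 ⟨L.erase s(a, b), ?_, Set.mem_iUnion₂.2 ⟨b, ?_, a, ?_, hL'⟩⟩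
  · rw [Finset.mem_powersetCard, Finset.card_erase_of_mem hf, hL.1.1]
    exact ⟨fun e he => Set.mem_toFinset.2 (hL.1.2.1 (Finset.mem_of_mem_erase he)), rfl⟩
  · exact Set.mem_toFinset.2 hb
  · rwa [Set.mem_ofPred_eq, hL']

lemma ncard_correlatedAt_le [Fintype V] (hG : G.IsBipartiteWith A B) {n t : ℕ}
    (hnt : n ≤ t) (hfree : ¬ G.Contains (Hgraph (n + 1) t)) (hM : IsMatchingIn G n M)
    (hv : v ∈ matchVerts M) (hvA : v ∈ A) :
    (correlatedAt G A B M (n + 1) (2 * t) v).ncard ≤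
      (t - 1) * (nbrGraph G A B M).edgeSet.ncard ^ n * (nbrSide G A M).ncard := by
  classical
  set P := (nbrGraph G A B M).edgeSet.toFinset.powersetCard n
  calc _ ≤ _ := Set.ncard_le_ncard correlatedAt_subset_biUnion
    _ ≤ ∑ L' ∈ P, ∑ b ∈ (nbrSide G A M).toFinset, (t - 1) := by
        refine (P.set_ncard_biUnion_le _).trans (Finset.sum_le_sum fun L' hL' => ?_)
        refine ((nbrSide G A M).toFinset.set_ncard_biUnion_le _).trans
          (Finset.sum_le_sum fun b hb => ?_)
        exact (Set.ncard_image_le (Set.toFinite _)).trans <| Nat.le_pred_of_lt <|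
          ncard_extensions_lt hG hnt hfree hM hv hvA (Finset.mem_powersetCard.1 hL').2
            (Set.mem_toFinset.1 hb)
    _ ≤ _ := by
        rw [Finset.sum_const, Finset.sum_const, smul_eq_mul, smul_eq_mul, Finset.card_powersetCard,
          ← Set.ncard_eq_toFinset_card', ← Set.ncard_eq_toFinset_card']
        calc _ ≤ _ := Nat.mul_le_mul_right _ (Nat.choose_le_pow _ _)
          _ = _ := by ring

lemma correlatedAt_comm {s c : ℕ} :
    correlatedAt G B A M s c v = correlatedAt G A B M s c v := by
  simp only [correlatedAt, nbrGraph_comm]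

lemma ncard_correlatedAt_edge_le [Fintype V] (hG : G.IsBipartiteWith A B) {s t : ℕ}
    (hst : s ≤ t) (hfree : ¬ G.Contains (Hgraph s t)) (hM : IsMatchingIn G (s - 1) M)
    (he : e ∈ M) :
    {L | ∃ v ∈ e, L ∈ correlatedAt G A B M s (2 * t) v}.ncard ≤
      (t - 1) * (nbrGraph G A B M).edgeSet.ncard ^ (s - 1) *
        (nbrSide G B M ∪ nbrSide G A M).ncard := by
  have hMne : M.Nonempty := ⟨e, he⟩
  obtain ⟨n, rfl⟩ : ∃ n, s = n + 1 := ⟨s - 1, by have := hM.1; have := hMne.card_pos; omega⟩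
  rw [Nat.add_sub_cancel] at hM ⊢
  obtain ⟨p, hpe, hpA⟩ := exists_mem_left_of_mem_edgeSet hG (hM.2.1 he)
  obtain ⟨q, hqe, hqB⟩ := exists_mem_left_of_mem_edgeSet hG.symm (hM.2.1 he)
  have hpq : p ≠ q := fun h => Set.disjoint_left.1 hG.disjoint hpA (h ▸ hqB)
  have hsub : {L | ∃ v ∈ e, L ∈ correlatedAt G A B M (n + 1) (2 * t) v} ⊆
      correlatedAt G A B M (n + 1) (2 * t) p ∪ correlatedAt G B A M (n + 1) (2 * t) q := by
    rintro L ⟨v, hv, hL⟩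
    rw [(Sym2.mem_and_mem_iff hpq).1 ⟨hpe, hqe⟩, Sym2.mem_iff] at hv
    rcases hv with rfl | rfl
    exacts [Or.inl hL, Or.inr (correlatedAt_comm ▸ hL)]
  have hp := ncard_correlatedAt_le hG (by omega) hfree hM ⟨e, he, hpe⟩ hpA
  have hq := ncard_correlatedAt_le hG.symm (by omega) hfree hM ⟨e, he, hqe⟩ hqB
  rw [nbrGraph_comm] at hq
  rw [Set.ncard_union_eq (isBipartiteWith_nbrGraph hG hM.2.1 hMne).disjoint]
  calc _ ≤ _ := Set.ncard_le_ncard hsub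
    _ ≤ _ := Set.ncard_union_le _ _
    _ ≤ _ := add_le_add hp hq
    _ = _ := by ring

end

theorem correlated_matchings_count_general {V : Type*} [Fintype V] (G : SimpleGraph V)
    (A B : Set V) (hdisj : Disjoint A B)
    (hbip : ∀ ⦃u v⦄, G.Adj u v → (u ∈ A ∧ v ∈ B) ∨ (u ∈ B ∧ v ∈ A))
    (s t : ℕ) (hst : s ≤ t)
    (hfree : ¬ G.Contains (Hgraph s t))
    (M : Finset (Sym2 V)) (hM : IsMatchingIn G (s - 1) M) :
    {L : Finset (Sym2 V) | IsMatchingIn (nbrGraph G A B M) s L ∧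
        Correlated G A B (2 * t) M L}.ncard ≤
      (s - 1) * (t - 1) * (nbrGraph G A B M).edgeSet.ncard ^ (s - 1) *
        ((commonNbrs G (matchVerts M ∩ B) \ matchVerts M) ∪
          (commonNbrs G (matchVerts M ∩ A) \ matchVerts M)).ncard := by
  have hG : G.IsBipartiteWith A B := ⟨hdisj, hbip⟩
  calc _ ≤ (⋃ e ∈ M, {L | ∃ v ∈ e, L ∈ correlatedAt G A B M s (2 * t) v}).ncard :=
        Set.ncard_le_ncard <| by
          rintro L ⟨hL, -, v, ⟨e, he, hve⟩, hdeg⟩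
          exact Set.mem_iUnion₂.2 ⟨e, he, v, hve, hL, hdeg⟩
    _ ≤ ∑ e ∈ M, {L | ∃ v ∈ e, L ∈ correlatedAt G A B M s (2 * t) v}.ncard :=
        M.set_ncard_biUnion_le _
    _ ≤ ∑ e ∈ M, (t - 1) * (nbrGraph G A B M).edgeSet.ncard ^ (s - 1) *
          (nbrSide G B M ∪ nbrSide G A M).ncard :=
        Finset.sum_le_sum fun e he => ncard_correlatedAt_edge_le hG hst hfree hM he
    _ = _ := by rw [Finset.sum_const, hM.1, smul_eq_mul, ← mul_assoc, ← mul_assoc]; rfl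

/-- Let `t ≥ s ≥ 2`, let `G` be an `H_{s,t}`-free bipartite graph with bipartition `(A, B)`
and let `M` be an `(s-1)`-matching in `G`.  Then the number of `s`-matchings `L` in `N(M)`
such that `(M, L)` is `2t`-correlated is at most
`(s-1)(t-1) · e(N(M))^{s-1} · v(N(M))`. -/
theorem correlated_matchings_count {V : Type*} [Fintype V] (G : SimpleGraph V)
    (A B : Set V) (hdisj : Disjoint A B) (hcover : A ∪ B = Set.univ)
    (hbip : ∀ ⦃u v⦄, G.Adj u v → (u ∈ A ∧ v ∈ B) ∨ (u ∈ B ∧ v ∈ A))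
    (s t : ℕ) (hs : 2 ≤ s) (hst : s ≤ t)
    (hfree : ¬ G.Contains (Hgraph s t))
    (M : Finset (Sym2 V)) (hM : IsMatchingIn G (s - 1) M) :
    {L : Finset (Sym2 V) | IsMatchingIn (nbrGraph G A B M) s L ∧
        Correlated G A B (2 * t) M L}.ncard ≤
      (s - 1) * (t - 1) * (nbrGraph G A B M).edgeSet.ncard ^ (s - 1) *
        ((commonNbrs G (matchVerts M ∩ B) \ matchVerts M) ∪
          (commonNbrs G (matchVerts M ∩ A) \ matchVerts M)).ncard :=
  correlated_matchings_count_general G A B hdisj hbip s t hst hfree M hM
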